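/- Let T be a tree on n vertices with nonsingular s×s matrix edge weights, L its Laplacian, L⁺ the Moore-Penrose inverse of L, and v a vertex. If (L⁺)_v denotes the principal submatrix of L⁺ obtained by deleting the row and column blocks of v, then (L⁺)_v = M L_v⁻¹ M, where M = I_{(n-1)s} - J_{n-1} ⊗ (1/n) I_s. -/

import Mathlib

/-!
Let `K = J_n ⊗ I_d` and `P = I - K / n`. The block row and column sums of `L` vanish, so
`L K = K L = 0`. On a tree with invertible weights `L_v` is invertible: a kernel vector, extended
by `0` at `v`, defines edge flows `W_{xw} (y_x - y_w)` conserved at every vertex but `v`, and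
summing the conservation laws over the side of an edge away from `v` shows that the flow across
every edge vanishes. With `N` the matrix `L_v⁻¹` padded by zeros and `Π` the projection onto the
blocks of `v`, one gets `L N = I - Π K` and `N L = I - K Π` (as `Π K Π = Π`), whence `P N P`
satisfies the four Penrose equations. So `L⁺ = P N P`, and deleting the blocks of `v` leaves
`M L_v⁻¹ M`.
-/

open scoped Classical
open Matrix

/-- The block Laplacian matrix of a graph whose edges carry `d × d` real matrix weights. -/
noncomputable def lap {V : Type*} [Fintype V] (G : SimpleGraph V) (d : ℕ)
    (W : Sym2 V → Matrix (Fin d) (Fin d) ℝ) :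
    Matrix (V × Fin d) (V × Fin d) ℝ :=
  Matrix.of fun p q =>
    if p.1 = q.1 then (∑ x ∈ G.neighborFinset p.1, W (Sym2.mk p.1 x)) p.2 q.2
    else if G.Adj p.1 q.1 then -(W (Sym2.mk p.1 q.1)) p.2 q.2 else 0

open Finset

namespace Matrix

variable {m n R : Type*} [Fintype m] [Fintype n] [CommRing R]

structure IsMoorePenroseInverse (A : Matrix m n R) (X : Matrix n m R) : Prop where
  self_mul_mul_self : A * X * A = A
  mul_self_mul : X * A * X = X
  isSymm_self_mul : (A * X).IsSymm
  isSymm_mul_self : (X * A).IsSymm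

namespace IsMoorePenroseInverse

variable {A : Matrix m n R} {X Y : Matrix n m R}

theorem self_mul_eq (hX : IsMoorePenroseInverse A X) (hY : IsMoorePenroseInverse A Y) :
    A * X = A * Y :=
  calc A * X = (A * Y * A * X)ᵀ := by rw [hY.self_mul_mul_self, hX.isSymm_self_mul.eq]
    _ = (A * X)ᵀ * (A * Y)ᵀ := by rw [Matrix.mul_assoc (A * Y), transpose_mul]
    _ = A * X * (A * Y) := by rw [hX.isSymm_self_mul.eq, hY.isSymm_self_mul.eq]
    _ = A * Y := by rw [← Matrix.mul_assoc, hX.self_mul_mul_self]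

theorem mul_self_eq (hX : IsMoorePenroseInverse A X) (hY : IsMoorePenroseInverse A Y) :
    X * A = Y * A :=
  calc X * A = X * A * (Y * A) := by
        rw [Matrix.mul_assoc X, ← Matrix.mul_assoc A, hY.self_mul_mul_self]
    _ = (Y * A * (X * A))ᵀ := by rw [transpose_mul, hX.isSymm_mul_self.eq, hY.isSymm_mul_self.eq]
    _ = Y * A := by
        rw [← Matrix.mul_assoc, Matrix.mul_assoc Y A X, Matrix.mul_assoc Y, hX.self_mul_mul_self,
          hY.isSymm_mul_self.eq]

theorem unique (hX : IsMoorePenroseInverse A X) (hY : IsMoorePenroseInverse A Y) : X = Y :=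
  calc X = X * A * X := hX.mul_self_mul.symm
    _ = Y * A * Y := by rw [hX.mul_self_eq hY, Matrix.mul_assoc, hX.self_mul_eq hY,
        ← Matrix.mul_assoc]
    _ = Y := hY.mul_self_mul

end IsMoorePenroseInverse

theorem isMoorePenroseInverse_mul_mul {A P N : Matrix n n R} (hP : P.IsSymm) (hPP : P * P = P)
    (hAP : A * P = A) (hPA : P * A = A) (hANP : A * N * P = P) (hPNA : P * N * A = P) :
    IsMoorePenroseInverse A (P * N * P) := by
  have hAX : A * (P * N * P) = P := by rw [← Matrix.mul_assoc, ← Matrix.mul_assoc, hAP, hANP]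
  have hXA : P * N * P * A = P := by rw [Matrix.mul_assoc, hPA, hPNA]
  refine ⟨?_, ?_, ?_, ?_⟩
  · rw [hAX, hPA]
  · rw [hXA, ← Matrix.mul_assoc, ← Matrix.mul_assoc, hPP]
  · rwa [hAX]
  · rwa [hXA]

section Grounded

variable {ι κ 𝕜 : Type*} [Fintype ι] [Fintype κ] [DecidableEq ι] [DecidableEq κ] [Field 𝕜]
  {A K : Matrix ι ι 𝕜} {E : Matrix ι κ 𝕜}

/-- When `A` is a Laplacian and the columns of `E` are the coordinate vectors off a vertex `v`,
this is the inverse of the reduced Laplacian `A_v`, padded with zeros in the blocks of `v`. -/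
noncomputable def groundedInv (A : Matrix ι ι 𝕜) (E : Matrix ι κ 𝕜) : Matrix ι ι 𝕜 :=
  E * (Eᵀ * A * E)⁻¹ * Eᵀ

theorem mul_groundedInv (hdet : IsUnit (Eᵀ * A * E).det) (hKA : K * A = 0)
    (hK : (1 - E * Eᵀ) * K * (1 - E * Eᵀ) = 1 - E * Eᵀ) :
    A * groundedInv A E = 1 - (1 - E * Eᵀ) * K := by
  rw [groundedInv]
  set Z := 1 - A * (E * (Eᵀ * A * E)⁻¹ * Eᵀ)
  have hEZ : Eᵀ * Z = 0 := by
    have : Eᵀ * (A * (E * (Eᵀ * A * E)⁻¹ * Eᵀ)) = Eᵀ * A * E * (Eᵀ * A * E)⁻¹ * Eᵀ := by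
      simp only [Matrix.mul_assoc]
    rw [Matrix.mul_sub, this, mul_nonsing_inv _ hdet, Matrix.mul_one, Matrix.one_mul, sub_self]
  have hPZ : (1 - E * Eᵀ) * Z = Z := by
    rw [Matrix.sub_mul, Matrix.one_mul, Matrix.mul_assoc, hEZ, Matrix.mul_zero, sub_zero]
  have hKZ : K * Z = K := by
    rw [Matrix.mul_sub, Matrix.mul_one, ← Matrix.mul_assoc, hKA, Matrix.zero_mul, sub_zero]
  have : Z = (1 - E * Eᵀ) * K :=
    calc Z = (1 - E * Eᵀ) * K * (1 - E * Eᵀ) * Z := by rw [hK, hPZ]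
      _ = (1 - E * Eᵀ) * K := by rw [Matrix.mul_assoc, hPZ, Matrix.mul_assoc, hKZ]
  rw [← this, sub_sub_cancel]

theorem groundedInv_mul (hdet : IsUnit (Eᵀ * A * E).det) (hAK : A * K = 0)
    (hK : (1 - E * Eᵀ) * K * (1 - E * Eᵀ) = 1 - E * Eᵀ) :
    groundedInv A E * A = 1 - K * (1 - E * Eᵀ) := by
  rw [groundedInv]
  set Z := 1 - E * (Eᵀ * A * E)⁻¹ * Eᵀ * A
  have hZE : Z * E = 0 := by
    have : E * (Eᵀ * A * E)⁻¹ * Eᵀ * A * E = E * ((Eᵀ * A * E)⁻¹ * (Eᵀ * A * E)) := by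
      simp only [Matrix.mul_assoc]
    rw [Matrix.sub_mul, this, nonsing_inv_mul _ hdet, Matrix.mul_one, Matrix.one_mul, sub_self]
  have hZP : Z * (1 - E * Eᵀ) = Z := by
    rw [Matrix.mul_sub, Matrix.mul_one, ← Matrix.mul_assoc, hZE, Matrix.zero_mul, sub_zero]
  have hZK : Z * K = K := by
    rw [Matrix.sub_mul, Matrix.one_mul, Matrix.mul_assoc, hAK, Matrix.mul_zero, sub_zero]
  have : Z = K * (1 - E * Eᵀ) :=
    calc Z = Z * ((1 - E * Eᵀ) * K * (1 - E * Eᵀ)) := by rw [hK, hZP]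
      _ = K * (1 - E * Eᵀ) := by
        rw [← Matrix.mul_assoc, ← Matrix.mul_assoc, hZP, hZK]
  rw [← this, sub_sub_cancel]

theorem isMoorePenroseInverse_mul_groundedInv_mul {c : 𝕜} (hc : c ≠ 0)
    (hdet : IsUnit (Eᵀ * A * E).det) (hAK : A * K = 0) (hKA : K * A = 0) (hKK : K * K = c • K)
    (hKsymm : K.IsSymm) (hK : (1 - E * Eᵀ) * K * (1 - E * Eᵀ) = 1 - E * Eᵀ) :
    IsMoorePenroseInverse A ((1 - c⁻¹ • K) * groundedInv A E * (1 - c⁻¹ • K)) := by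
  have hKP : K * (1 - c⁻¹ • K) = 0 := by
    rw [Matrix.mul_sub, Matrix.mul_one, Matrix.mul_smul, hKK, smul_smul, inv_mul_cancel₀ hc,
      one_smul, sub_self]
  have hPK : (1 - c⁻¹ • K) * K = 0 := by
    rw [Matrix.sub_mul, Matrix.one_mul, Matrix.smul_mul, hKK, smul_smul, inv_mul_cancel₀ hc,
      one_smul, sub_self]
  apply isMoorePenroseInverse_mul_mul
  · exact isSymm_one.sub (hKsymm.smul _)
  · rw [Matrix.mul_sub, Matrix.mul_one, Matrix.mul_smul, hPK, smul_zero, sub_zero]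
  · rw [Matrix.mul_sub, Matrix.mul_one, Matrix.mul_smul, hAK, smul_zero, sub_zero]
  · rw [Matrix.sub_mul, Matrix.one_mul, Matrix.smul_mul, hKA, smul_zero, sub_zero]
  · rw [mul_groundedInv hdet hKA hK, Matrix.sub_mul, Matrix.one_mul, Matrix.mul_assoc, hKP,
      Matrix.mul_zero, sub_zero]
  · rw [Matrix.mul_assoc, groundedInv_mul hdet hAK hK, Matrix.mul_sub, Matrix.mul_one,
      ← Matrix.mul_assoc, hPK, Matrix.zero_mul, sub_zero]

end Grounded

section Inclusion

variable {ι κ : Type*} [DecidableEq ι]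

def inclusionMatrix (R : Type*) [Zero R] [One R] (e : κ → ι) : Matrix ι κ R :=
  (1 : Matrix ι ι R).submatrix id e

variable {R : Type*} [CommSemiring R]

theorem transpose_inclusionMatrix_mul_mul [Fintype ι] (A : Matrix ι ι R) (e : κ → ι) :
    (inclusionMatrix R e)ᵀ * A * inclusionMatrix R e = A.submatrix e e := by
  ext a b
  simp [inclusionMatrix, mul_apply, one_apply]

theorem transpose_inclusionMatrix_mulVec [Fintype ι] (e : κ → ι) (w : ι → R) :
    (inclusionMatrix R e)ᵀ *ᵥ w = w ∘ e := by
  ext a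
  simp [inclusionMatrix, mulVec, dotProduct, one_apply]

theorem inclusionMatrix_mul_transpose [Fintype κ] {e : κ → ι} (he : Function.Injective e) :
    inclusionMatrix R e * (inclusionMatrix R e)ᵀ =
      diagonal fun p => if p ∈ Set.range e then 1 else 0 := by
  ext p q
  simp only [inclusionMatrix, mul_apply, transpose_apply, submatrix_apply, id, one_apply,
    diagonal_apply, ite_mul, one_mul, zero_mul]
  by_cases hp : p ∈ Set.range e
  · obtain ⟨a, rfl⟩ := hp
    simp only [he.eq_iff, Set.mem_range_self, if_true]
    rw [Fintype.sum_eq_single a fun b hb => by simp [Ne.symm hb]]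
    simp [eq_comm]
  · have : ∀ b, p ≠ e b := fun b h => hp ⟨b, h.symm⟩
    simp [this, hp]

end Inclusion

theorem one_sub_inclusionMatrix_mul_mul_one_sub {ι κ R : Type*} [Fintype ι] [Fintype κ]
    [DecidableEq ι] [CommRing R] {e : κ → ι}
    (he : Function.Injective e) {K : Matrix ι ι R}
    (hK : ∀ p ∉ Set.range e, ∀ q ∉ Set.range e, K p q = (1 : Matrix ι ι R) p q) :
    (1 - inclusionMatrix R e * (inclusionMatrix R e)ᵀ) * K *
        (1 - inclusionMatrix R e * (inclusionMatrix R e)ᵀ) =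
      1 - inclusionMatrix R e * (inclusionMatrix R e)ᵀ := by
  rw [inclusionMatrix_mul_transpose he, ← diagonal_one, diagonal_sub]
  ext p q
  simp only [diagonal_mul, mul_diagonal, diagonal_apply]
  by_cases hp : p ∈ Set.range e
  · simp [hp]
  by_cases hq : q ∈ Set.range e
  · have hpq : p ≠ q := fun h => hp (h ▸ hq)
    simp [hq, hpq]
  simp [hp, hq, hK p hp q hq, one_apply]

end Matrix

namespace SimpleGraph

theorem IsBridge.eq_of_adj_of_reachable_of_not_reachable {V : Type*} {G : SimpleGraph V}
    {x y z w : V} (hb : G.IsBridge s(x, y)) (hz : (G.deleteEdges {s(x, y)}).Reachable x z)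
    (hzw : G.Adj z w) (hw : ¬ (G.deleteEdges {s(x, y)}).Reachable x w) : z = x ∧ w = y := by
  have hedge : s(z, w) = s(x, y) := by
    by_contra hne
    exact hw (hz.trans (deleteEdges_adj.2 ⟨hzw, by simpa using hne⟩).reachable)
  rcases Sym2.eq_iff.1 hedge with ⟨rfl, rfl⟩ | ⟨rfl, rfl⟩
  · exact ⟨rfl, rfl⟩
  · exact absurd hz (isBridge_iff.1 hb)

variable {V M : Type*} {G : SimpleGraph V} [G.LocallyFinite] [AddCommGroup M]
  [IsAddTorsionFree M]

theorem sum_sum_neighborFinset_eq_sum_sum_compl {f : V → V → M} (hf : ∀ x y, f x y = -f y x)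
    (S : Finset V) :
    ∑ x ∈ S, ∑ y ∈ G.neighborFinset x, f x y =
      ∑ x ∈ S, ∑ y ∈ G.neighborFinset x with y ∉ S, f x y := by
  have hinner : ∑ x ∈ S, ∑ y ∈ G.neighborFinset x with y ∈ S, f x y = 0 := by
    set g : V → V → M := fun x y => if G.Adj x y then f x y else 0
    have hg : ∀ x y, g x y = -g y x := fun x y => by
      by_cases h : G.Adj x y <;> simp [g, h, G.adj_comm y x, hf x y]
    have hfilter : ∀ x, (G.neighborFinset x).filter (· ∈ S) = S.filter (G.Adj x) := fun x => by
      ext y; simp [and_comm]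
    simp only [hfilter, sum_filter]
    rw [← self_eq_neg]
    calc ∑ x ∈ S, ∑ y ∈ S, g x y = ∑ y ∈ S, ∑ x ∈ S, -g y x := by
          rw [sum_comm]; simp only [← hg]
      _ = -∑ x ∈ S, ∑ y ∈ S, g x y := by simp only [sum_neg_distrib]
  simp only [← sum_filter_add_sum_filter_not (G.neighborFinset _) (· ∈ S), sum_add_distrib,
    hinner, zero_add]

variable [Fintype V] {f : V → V → M} {v : V}

theorem IsBridge.eq_zero_of_sum_neighborFinset_eq_zero {x y : V} (hb : G.IsBridge s(x, y))
    (hxy : G.Adj x y) (hf : ∀ x y, f x y = -f y x)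
    (hdiv : ∀ u ≠ v, ∑ y ∈ G.neighborFinset u, f u y = 0)
    (hxv : ¬ (G.deleteEdges {s(x, y)}).Reachable x v) : f x y = 0 := by
  set S : Finset V := {z | (G.deleteEdges {s(x, y)}).Reachable x z}
  have hxS : x ∈ S := by simp [S]
  have hyS : y ∉ S := by simpa [S] using isBridge_iff.1 hb
  have hout : ∀ z ∈ S, (G.neighborFinset z).filter (· ∉ S) = if z = x then {y} else ∅ := by
    intro z hz
    ext w
    simp only [S, mem_filter, mem_univ, true_and, mem_neighborFinset] at hz ⊢
    split_ifs with hzx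
    · subst hzx
      rw [mem_singleton]
      refine ⟨fun h => (hb.eq_of_adj_of_reachable_of_not_reachable hz h.1 h.2).2, ?_⟩
      rintro rfl
      exact ⟨hxy, by simpa [S] using hyS⟩
    · simpa using fun hzw hw => hzx (hb.eq_of_adj_of_reachable_of_not_reachable hz hzw hw).1
  calc f x y = ∑ z ∈ S, ∑ w ∈ G.neighborFinset z with w ∉ S, f z w := by
        rw [sum_eq_single_of_mem x hxS fun z hz hzx => by rw [hout z hz, if_neg hzx, sum_empty],
          hout x hxS, if_pos rfl, sum_singleton]
    _ = 0 := by
        rw [← sum_sum_neighborFinset_eq_sum_sum_compl hf]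
        exact sum_eq_zero fun z hz => hdiv z fun hzv => hxv (by simpa [S, hzv] using hz)

theorem IsAcyclic.eq_zero_of_sum_neighborFinset_eq_zero (hG : G.IsAcyclic)
    (hf : ∀ x y, f x y = -f y x) (hdiv : ∀ u ≠ v, ∑ y ∈ G.neighborFinset u, f u y = 0)
    {x y : V} (hxy : G.Adj x y) : f x y = 0 := by
  have hb := isAcyclic_iff_forall_adj_isBridge.1 hG hxy
  by_cases hxv : (G.deleteEdges {s(x, y)}).Reachable x v
  · have hyv : ¬ (G.deleteEdges {s(y, x)}).Reachable y v := fun hyv =>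
      isBridge_iff.1 hb (hxv.trans (by simpa [Sym2.eq_swap] using hyv.symm))
    have hb' : G.IsBridge s(y, x) := Sym2.eq_swap ▸ hb
    rw [hf, hb'.eq_zero_of_sum_neighborFinset_eq_zero hxy.symm hf hdiv hyv, neg_zero]
  · exact hb.eq_zero_of_sum_neighborFinset_eq_zero hxy hf hdiv hxv

end SimpleGraph

def allOnesKronOne (V : Type*) (d : ℕ) : Matrix (V × Fin d) (V × Fin d) ℝ :=
  (1 : Matrix (Fin d) (Fin d) ℝ).submatrix Prod.snd Prod.snd

theorem isSymm_allOnesKronOne {V : Type*} {d : ℕ} : (allOnesKronOne V d).IsSymm := by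
  simp [allOnesKronOne, IsSymm, transpose_submatrix]

theorem allOnesKronOne_mul_self {V : Type*} [Fintype V] {d : ℕ} :
    allOnesKronOne V d * allOnesKronOne V d = (Fintype.card V : ℝ) • allOnesKronOne V d := by
  ext p q
  by_cases h : p.2 = q.2 <;> simp [allOnesKronOne, mul_apply, Fintype.sum_prod_type, one_apply, h]

theorem allOnesKronOne_apply_of_notMem_range {V : Type*} [DecidableEq V] {d : ℕ} {v : V} :
    ∀ p ∉ Set.range (Prod.map Subtype.val id : {x // x ≠ v} × Fin d → V × Fin d),
    ∀ q ∉ Set.range (Prod.map Subtype.val id : {x // x ≠ v} × Fin d → V × Fin d),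
      allOnesKronOne V d p q = (1 : Matrix (V × Fin d) (V × Fin d) ℝ) p q := by
  have hv : ∀ p ∉ Set.range (Prod.map Subtype.val id : {x // x ≠ v} × Fin d → V × Fin d),
      p.1 = v := fun p hp => by_contra fun h => hp ⟨(⟨p.1, h⟩, p.2), rfl⟩
  rintro ⟨x, i⟩ hp ⟨y, j⟩ hq
  obtain rfl : x = v := hv _ hp
  obtain rfl : y = x := hv _ hq
  simp [allOnesKronOne, one_apply]

section Laplacian

variable {V : Type*} [Fintype V] (G : SimpleGraph V) (d : ℕ)
  (W : Sym2 V → Matrix (Fin d) (Fin d) ℝ)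

theorem lap_mulVec_apply (y : V × Fin d → ℝ) (u : V) :
    (fun i => (lap G d W *ᵥ y) (u, i)) =
      ∑ w ∈ G.neighborFinset u, W s(u, w) *ᵥ (Function.curry y u - Function.curry y w) := by
  have hrow : ∀ i x, ∑ j, lap G d W (u, i) (x, j) * y (x, j) =
      (if u = x then ((∑ w ∈ G.neighborFinset u, W s(u, w)) *ᵥ Function.curry y u) i else 0) +
        if G.Adj u x then -(W s(u, x) *ᵥ Function.curry y x) i else 0 := by
    intro i x
    by_cases hux : u = x
    · subst hux; simp [lap, mulVec, dotProduct]
    · by_cases hadj : G.Adj u x <;> simp [lap, mulVec, dotProduct, hux, hadj]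
  ext i
  rw [mulVec, dotProduct, Fintype.sum_prod_type, sum_congr rfl fun x _ => hrow i x,
    sum_add_distrib, sum_ite_eq, if_pos (mem_univ u), ← sum_filter,
    ← G.neighborFinset_eq_filter, sum_mulVec]
  simp only [Finset.sum_apply, mulVec_sub, Pi.sub_apply, sum_sub_distrib, sum_neg_distrib]
  exact (sub_eq_add_neg _ _).symm

theorem lap_transpose : (lap G d W)ᵀ = lap G d fun e => (W e)ᵀ := by
  ext ⟨x, i⟩ ⟨y, j⟩
  by_cases hxy : x = y
  · subst hxy; simp [lap, Matrix.sum_apply]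
  · by_cases hadj : G.Adj x y
    · simp [lap, hxy, Ne.symm hxy, hadj, hadj.symm, Sym2.eq_swap]
    · simp [lap, hxy, Ne.symm hxy, hadj, G.adj_comm]

theorem lap_mul_allOnesKronOne : lap G d W * allOnesKronOne V d = 0 := by
  ext ⟨u, i⟩ q
  have h := congrFun (lap_mulVec_apply G d W (fun r => allOnesKronOne V d r q) u) i
  have hconst : ∀ w, Function.curry (fun r => allOnesKronOne V d r q) u =
      Function.curry (fun r => allOnesKronOne V d r q) w := fun _ => rfl
  simp only [← hconst, sub_self, mulVec_zero, sum_const_zero, Pi.zero_apply] at h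
  exact h

theorem allOnesKronOne_mul_lap : allOnesKronOne V d * lap G d W = 0 := by
  rw [← transpose_transpose (allOnesKronOne V d * _), transpose_mul, lap_transpose,
    isSymm_allOnesKronOne.eq, lap_mul_allOnesKronOne, transpose_zero]

theorem eq_zero_of_lap_mulVec_eq_zero (hT : G.IsTree) (hW : ∀ e ∈ G.edgeSet, IsUnit (W e))
    {v : V} {y : V × Fin d → ℝ} (hv : ∀ i, y (v, i) = 0)
    (hy : ∀ u ≠ v, ∀ i, (lap G d W *ᵥ y) (u, i) = 0) : y = 0 := by
  set f : V → V → Fin d → ℝ :=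
    fun x w => W s(x, w) *ᵥ (Function.curry y x - Function.curry y w)
  have hf : ∀ x w, f x w = -f w x := fun x w => by
    simp only [f, Sym2.eq_swap (a := w), ← mulVec_neg, neg_sub]
  have hflow : ∀ x w, G.Adj x w → f x w = 0 := fun x w hxw =>
    hT.isAcyclic.eq_zero_of_sum_neighborFinset_eq_zero hf
      (fun u hu => by rw [← lap_mulVec_apply]; exact funext (hy u hu)) hxw
  have hadj : ∀ x w, G.Adj x w → Function.curry y x = Function.curry y w := fun x w hxw =>
    sub_eq_zero.1 <| mulVec_injective_iff_isUnit.2 (hW _ (G.mem_edgeSet.2 hxw)) <| by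
      rw [mulVec_zero]; exact hflow x w hxw
  have hreach : ∀ x, Function.curry y x = 0 := by
    intro x
    induction (SimpleGraph.reachable_iff_reflTransGen v x).1 (hT.connected v x) with
    | refl => exact funext hv
    | tail _ hbc ih => rw [← hadj _ _ hbc, ih]
  ext ⟨x, i⟩
  exact congrFun (hreach x) i

theorem isUnit_det_lap_submatrix [DecidableEq V] (hT : G.IsTree)
    (hW : ∀ e ∈ G.edgeSet, IsUnit (W e)) (v : V) :
    IsUnit ((lap G d W).submatrix (Prod.map Subtype.val id) (Prod.map Subtype.val id) :
      Matrix ({x // x ≠ v} × Fin d) ({x // x ≠ v} × Fin d) ℝ).det := by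
  set e : {x // x ≠ v} × Fin d → V × Fin d := Prod.map Subtype.val id
  set E := inclusionMatrix ℝ e
  rw [isUnit_iff_ne_zero, Ne, ← exists_mulVec_eq_zero_iff]
  rintro ⟨z, hz0, hz⟩
  have hy : E *ᵥ z = 0 := by
    refine eq_zero_of_lap_mulVec_eq_zero G d W hT hW (v := v) (fun i => ?_) fun u hu i => ?_
    · have hne : ∀ a, (v, i) ≠ e a := fun a h => a.1.2 (congrArg Prod.fst h).symm
      simp [E, inclusionMatrix, mulVec, dotProduct, one_apply, hne]
    · have h :=
        congrFun (transpose_inclusionMatrix_mulVec e (lap G d W *ᵥ E *ᵥ z)) (⟨u, hu⟩, i)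
      rw [mulVec_mulVec, mulVec_mulVec, transpose_inclusionMatrix_mul_mul, hz] at h
      exact h.symm
  have hEE : Eᵀ * E = 1 := by
    rw [← Matrix.mul_one Eᵀ, transpose_inclusionMatrix_mul_mul,
      submatrix_one _ (Subtype.val_injective.prodMap Function.injective_id)]
  apply hz0
  rw [← one_mulVec z, ← hEE, ← mulVec_mulVec, hy, mulVec_zero]

end Laplacian

/-- For a tree with nonsingular matrix edge weights, Laplacian `L` with Moore–Penrose
inverse `L⁺`, and a vertex `v`: the principal submatrix of `L⁺` with the blocks of `v`
deleted equals `M L_v⁻¹ M` where `M = I - J_{n-1} ⊗ (1/n) I_d`. -/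
theorem pinv_principal_submatrix {V : Type*} [Fintype V] [DecidableEq V]
    (G : SimpleGraph V) (hT : G.IsTree) (d : ℕ)
    (W : Sym2 V → Matrix (Fin d) (Fin d) ℝ)
    (hW : ∀ e ∈ G.edgeSet, IsUnit (W e))
    (Lp : Matrix (V × Fin d) (V × Fin d) ℝ)
    (h1 : lap G d W * Lp * lap G d W = lap G d W)
    (h2 : Lp * lap G d W * Lp = Lp)
    (h3 : (lap G d W * Lp)ᵀ = lap G d W * Lp)
    (h4 : (Lp * lap G d W)ᵀ = Lp * lap G d W)
    (v : V) :
    letI emb : {x : V // x ≠ v} × Fin d → V × Fin d := fun p => ((p.1 : V), p.2)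
    letI Lv := (lap G d W).submatrix emb emb
    letI M : Matrix ({x : V // x ≠ v} × Fin d) ({x : V // x ≠ v} × Fin d) ℝ :=
      1 - Matrix.of (fun p q : {x : V // x ≠ v} × Fin d =>
        if p.2 = q.2 then (1 : ℝ) / (Fintype.card V) else 0)
    Lp.submatrix emb emb = M * Lv⁻¹ * M := by
  set e : {x : V // x ≠ v} × Fin d → V × Fin d := Prod.map Subtype.val id
  set E := inclusionMatrix ℝ e
  set P := 1 - (Fintype.card V : ℝ)⁻¹ • allOnesKronOne V d
  have he : Function.Injective e := Subtype.val_injective.prodMap Function.injective_id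
  have hn : (Fintype.card V : ℝ) ≠ 0 := Nat.cast_ne_zero.2 (Fintype.card_pos_iff.2 ⟨v⟩).ne'
  have hLp : Lp = P * groundedInv (lap G d W) E * P := by
    refine IsMoorePenroseInverse.unique ⟨h1, h2, h3, h4⟩ ?_
    refine isMoorePenroseInverse_mul_groundedInv_mul hn ?_ (lap_mul_allOnesKronOne G d W)
      (allOnesKronOne_mul_lap G d W) allOnesKronOne_mul_self isSymm_allOnesKronOne
      (one_sub_inclusionMatrix_mul_mul_one_sub he allOnesKronOne_apply_of_notMem_range)
    rw [transpose_inclusionMatrix_mul_mul]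
    exact isUnit_det_lap_submatrix G d W hT hW v
  have hM : Eᵀ * P * E = 1 - Matrix.of (fun p q : {x : V // x ≠ v} × Fin d =>
      if p.2 = q.2 then (1 : ℝ) / (Fintype.card V) else 0) := by
    rw [transpose_inclusionMatrix_mul_mul]
    ext p q
    simp [P, allOnesKronOne, one_apply, e, Prod.ext_iff, Subtype.ext_iff]
  show Lp.submatrix e e = _ * ((lap G d W).submatrix e e)⁻¹ * _
  rw [← transpose_inclusionMatrix_mul_mul Lp, ← transpose_inclusionMatrix_mul_mul (lap G d W),
    hLp, ← hM]
  simp only [groundedInv, E, Matrix.mul_assoc]
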